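/- arXiv:1104.5438 — 6 statements merged into one kernel-verified Lean document; each statement's English description precedes it below -/
import Mathlib

section
/- Let (i, p, h) be a deformation retraction between chain complexes (C₂, d₂) and (C₁, d₁) of modules over a commutative ring. For a chain complex C and r ∈ ℤ, let Homʳ(C, C) denote the module of degree-r graded maps f (families f_m : C_m → C_{m+r}) with differential δ(f) = d∘f − (−1)^r f∘d, forming the Hom-complex Hom•(C, C). Then the map g : Hom•(C₁, C₁) → Hom•(C₂, C₂) given by g(f) = p∘f∘i is a map of complexes (δ∘g = g∘δ) and a quasi-isomorphism: it induces an isomorphism on cohomology in every degree. -/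
/-!
Since `i` and `p` are chain maps, `g(f) = p ∘ f ∘ i` commutes with `δ`, and so does
`ψ ↦ i ∘ ψ ∘ p`; as `p ∘ i = id` the latter is a section of `g`, which gives surjectivity on
cohomology. For injectivity put `e = i ∘ p = id - (d h + h d)`. For a cycle `f` of degree `k`,
`δ(h ∘ f) = (d h + h d) ∘ f` and `δ(f ∘ h) = (-1)^k f ∘ (d h + h d)`, hence
`f - e ∘ f ∘ e = δ(h ∘ f + (-1)^k e ∘ f ∘ h)`. So `f` is cohomologous to `i ∘ g(f) ∘ p`,
which is a boundary whenever `g(f)` is.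
-/

noncomputable section

/-- A ℤ-indexed chain complex of modules over a commutative ring `R`, with differential of
degree `−1`.  The differential is indexed by pairs of degrees related by `i = j + 1`
(so `d i j : X i →ₗ[R] X j`). -/
structure Cx (R : Type) [CommRing R] where
  X : ℤ → Type
  [isAddCommGroup : ∀ i, AddCommGroup (X i)]
  [isModule : ∀ i, Module R (X i)]
  d : ∀ (i j : ℤ), i = j + 1 → (X i →ₗ[R] X j)
  dd : ∀ (i j k : ℤ) (h1 : i = j + 1) (h2 : j = k + 1), (d j k h2) ∘ₗ (d i j h1) = 0

attribute [instance] Cx.isAddCommGroup Cx.isModule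

variable {R : Type} [CommRing R]

/-- A chain map between chain complexes. -/
@[ext]
structure ChainMap (C D : Cx R) where
  f : ∀ i, C.X i →ₗ[R] D.X i
  comm : ∀ (i j : ℤ) (hij : i = j + 1), (D.d i j hij) ∘ₗ (f i) = (f j) ∘ₗ (C.d i j hij)

/-- Composition of chain maps (`a.comp b` applies `b` first). -/
def ChainMap.comp {C D E : Cx R} (a : ChainMap D E) (b : ChainMap C D) : ChainMap C E where
  f i := (a.f i) ∘ₗ (b.f i)
  comm i j hij := by
    rw [← LinearMap.comp_assoc, a.comm, LinearMap.comp_assoc, b.comm, LinearMap.comp_assoc]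

/-- The identity chain map. -/
def ChainMap.id (C : Cx R) : ChainMap C C where
  f _ := LinearMap.id
  comm _ _ _ := rfl

/-- A graded map of degree `r` between chain complexes: a family of maps
`C_m → D_{m + r}`, indexed by pairs of degrees related by `m + r = n`. -/
abbrev GMap (C D : Cx R) (r : ℤ) := ∀ (m n : ℤ), m + r = n → (C.X m →ₗ[R] D.X n)

/-- A deformation retraction between chain complexes `(C₂, d₂)` and `(C₁, d₁)`:
chain maps `i : C₂ → C₁`, `p : C₁ → C₂` with `p∘i = id`, and a degree `+1` homotopy `h`
with `id − i∘p = d₁∘h + h∘d₁`. -/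
structure DefRetract (C₂ C₁ : Cx R) where
  i : ChainMap C₂ C₁
  p : ChainMap C₁ C₂
  h : GMap C₁ C₁ 1
  pi : ∀ m : ℤ, (p.f m) ∘ₗ (i.f m) = LinearMap.id
  homotopy : ∀ m : ℤ,
    (LinearMap.id : C₁.X m →ₗ[R] C₁.X m) - (i.f m) ∘ₗ (p.f m)
      = (C₁.d (m + 1) m rfl) ∘ₗ (h m (m + 1) rfl)
        + (h (m - 1) m (by omega)) ∘ₗ (C₁.d m (m - 1) (by omega))

/-- Two chain maps `f, g : C → D` are homotopic if `f − g = d∘K + K∘d` for some degree `+1`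
graded map `K`. -/
def Homotopic {C D : Cx R} (a b : ChainMap C D) : Prop :=
  ∃ K : GMap C D 1, ∀ m : ℤ,
    a.f m - b.f m
      = (D.d (m + 1) m rfl) ∘ₗ (K m (m + 1) rfl)
        + (K (m - 1) m (by omega)) ∘ₗ (C.d m (m - 1) (by omega))

end

namespace GMap

variable {R : Type} [CommRing R] {C D : Cx R} {r : ℤ}

instance : Zero (GMap C D r) := ⟨fun _ _ _ => 0⟩
instance : Add (GMap C D r) := ⟨fun f g => fun m n h => f m n h + g m n h⟩
instance : Neg (GMap C D r) := ⟨fun f => fun m n h => -(f m n h)⟩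
instance : Sub (GMap C D r) := ⟨fun f g => fun m n h => f m n h - g m n h⟩
instance : SMul ℤ (GMap C D r) := ⟨fun z f => fun m n h => z • f m n h⟩
instance : SMul ℕ (GMap C D r) := ⟨fun z f => fun m n h => z • f m n h⟩

instance instAddCommGroup : AddCommGroup (GMap C D r) where
  add_assoc f g k := by funext m n h; exact add_assoc _ _ _
  zero_add f := by funext m n h; exact zero_add _
  add_zero f := by funext m n h; exact add_zero _
  add_comm f g := by funext m n h; exact add_comm _ _
  neg_add_cancel f := by funext m n h; exact neg_add_cancel _
  sub_eq_add_neg f g := by funext m n h; exact sub_eq_add_neg _ _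
  nsmul n f := n • f
  nsmul_zero f := by funext m n h; exact zero_smul ℕ _
  nsmul_succ k f := by funext m n h; exact succ_nsmul _ _
  zsmul z f := z • f
  zsmul_zero' f := by funext m n h; exact zero_smul ℤ _
  zsmul_succ' k f := by
    funext m n h
    show ((k : ℤ) + 1) • f m n h = (k : ℤ) • f m n h + f m n h
    rw [add_smul, one_smul]
  zsmul_neg' k f := by
    funext m n h
    show (Int.negSucc k) • f m n h = -(((k : ℤ) + 1) • f m n h)
    rw [Int.negSucc_eq, neg_smul]

end GMap

section HomComplex

variable {R : Type} [CommRing R]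

/-- The differential of the Hom-complex: for a degree `r` graded map `f`,
`δ(f) = d∘f − (−1)^r f∘d`, a graded map of degree `r − 1` (here indexed by pairs
`(r, s)` with `s + 1 = r`). -/
def homDelta {C D : Cx R} (r s : ℤ) (hrs : s + 1 = r) (f : GMap C D r) : GMap C D s :=
  fun m n hmn =>
    (D.d (m + r) n (by omega)) ∘ₗ (f m (m + r) rfl)
      - ((Int.negOnePow r : ℤˣ) : ℤ) • ((f (m - 1) n (by omega)) ∘ₗ (C.d m (m - 1) (by omega)))

/-- The map `g(f) = p∘f∘i : Hom•(C₁, C₁) → Hom•(C₂, C₂)` induced by a deformation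
retraction, in each degree. -/
def homG {C₂ C₁ : Cx R} (ρ : DefRetract C₂ C₁) {r : ℤ} (f : GMap C₁ C₁ r) :
    GMap C₂ C₂ r :=
  fun m n hmn => (ρ.p.f n) ∘ₗ (f m n hmn) ∘ₗ (ρ.i.f m)

end HomComplex

namespace GMap

variable {R : Type} [CommRing R] {B C D E : Cx R} {r : ℤ}

theorem add_apply (f g : GMap C D r) {m n : ℤ} (h : m + r = n) :
    (f + g) m n h = f m n h + g m n h := rfl

theorem sub_apply (f g : GMap C D r) {m n : ℤ} (h : m + r = n) :
    (f - g) m n h = f m n h - g m n h := rfl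

theorem zsmul_apply (z : ℤ) (f : GMap C D r) {m n : ℤ} (h : m + r = n) :
    (z • f) m n h = z • f m n h := rfl

theorem zero_apply {m n : ℤ} (h : m + r = n) : (0 : GMap C D r) m n h = 0 := rfl

def postcomp (a : ∀ n, D.X n →ₗ[R] E.X n) (f : GMap C D r) : GMap C E r :=
  fun m n h => a n ∘ₗ f m n h

def precomp (f : GMap C D r) (b : ∀ m, B.X m →ₗ[R] C.X m) : GMap B D r :=
  fun m n h => f m n h ∘ₗ b m

/-- The degree `t = r + s` of `g ∘ f` is a separate index because `GMap C E (r + s)` and, say,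
`GMap C E (k + 1)` are different types even when `r + s = k + 1`. -/
def comp {s : ℤ} (g : GMap D E s) (f : GMap C D r) (t : ℤ) (hrst : r + s = t) : GMap C E t :=
  fun m n h => g (m + r) n (by omega) ∘ₗ f m (m + r) rfl

-- Evaluating at a freely chosen intermediate degree `b` avoids transport along `m + r = b`.
theorem comp_apply_of_eq {s t : ℤ} (g : GMap D E s) (f : GMap C D r) (hrst : r + s = t)
    {m n b : ℤ} (hmn : m + t = n) (hmb : m + r = b) (hbn : b + s = n) :
    g.comp f t hrst m n hmn = g b n hbn ∘ₗ f m b hmb := by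
  subst hmb
  rfl

def dAnticomm (h : GMap D D 1) (n : ℤ) : D.X n →ₗ[R] D.X n :=
  D.d (n + 1) n rfl ∘ₗ h n (n + 1) rfl + h (n - 1) n (by omega) ∘ₗ D.d n (n - 1) (by omega)

end GMap

section HomDelta

variable {R : Type} [CommRing R] {B C D E : Cx R} {r s : ℤ}

theorem homDelta_apply_of_eq (hrs : s + 1 = r) (f : GMap C D r) {m n a b : ℤ}
    (hmn : m + s = n) (hma : m + r = a) (han : a = n + 1) (hmb : m = b + 1) (hbn : b + r = n) :
    homDelta r s hrs f m n hmn
      = D.d a n han ∘ₗ f m a hma - (r.negOnePow : ℤ) • (f b n hbn ∘ₗ C.d m b hmb) := by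
  subst hma
  obtain rfl : b = m - 1 := by omega
  rfl

theorem homDelta_add (hrs : s + 1 = r) (f g : GMap C D r) :
    homDelta r s hrs (f + g) = homDelta r s hrs f + homDelta r s hrs g := by
  funext m n h
  simp only [homDelta, GMap.add_apply, LinearMap.add_comp, LinearMap.comp_add, smul_add]
  abel

theorem homDelta_zsmul (hrs : s + 1 = r) (z : ℤ) (f : GMap C D r) :
    homDelta r s hrs (z • f) = z • homDelta r s hrs f := by
  funext m n h
  simp only [homDelta, GMap.zsmul_apply, LinearMap.smul_comp, LinearMap.comp_smul, smul_sub,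
    smul_comm z]

theorem homDelta_zero (hrs : s + 1 = r) : homDelta r s hrs (0 : GMap C D r) = 0 := by
  simpa using homDelta_zsmul hrs 0 (0 : GMap C D r)

theorem homDelta_postcomp (hrs : s + 1 = r) (a : ChainMap D E) (f : GMap C D r) :
    homDelta r s hrs (GMap.postcomp a.f f) = GMap.postcomp a.f (homDelta r s hrs f) := by
  funext m n h
  simp only [homDelta, GMap.postcomp, LinearMap.comp_sub, LinearMap.comp_smul,
    ← LinearMap.comp_assoc, a.comm]

theorem homDelta_precomp (hrs : s + 1 = r) (f : GMap C D r) (b : ChainMap B C) :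
    homDelta r s hrs (GMap.precomp f b.f) = GMap.precomp (homDelta r s hrs f) b.f := by
  funext m n h
  simp only [homDelta, GMap.precomp, LinearMap.sub_comp, LinearMap.smul_comp,
    LinearMap.comp_assoc, b.comm]

end HomDelta

section Homotopy

variable {R : Type} [CommRing R] {C D E : Cx R} {k : ℤ}

theorem homDelta_comp_eq_postcomp_dAnticomm (h : GMap D D 1) (f : GMap C D k)
    (hf : homDelta k (k - 1) (by omega) f = 0) :
    homDelta (k + 1) k rfl (h.comp f (k + 1) rfl) = GMap.postcomp h.dAnticomm f := by
  funext m n hmn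
  have hcycle := congrFun (congrFun (congrFun hf m) (n - 1)) (by omega)
  rw [homDelta_apply_of_eq (a := n) (b := m - 1) _ _ _ hmn (by omega) (by omega) (by omega),
    GMap.zero_apply, sub_eq_zero] at hcycle
  rw [homDelta_apply_of_eq (a := n + 1) (b := m - 1) _ _ _ (by omega) rfl (by omega) (by omega),
    GMap.comp_apply_of_eq (b := n) _ _ _ _ hmn rfl,
    GMap.comp_apply_of_eq (b := n - 1) _ _ _ _ (by omega) (by omega)]
  rw [GMap.postcomp, GMap.dAnticomm, LinearMap.add_comp, LinearMap.comp_assoc,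
    LinearMap.comp_assoc, LinearMap.comp_assoc, hcycle, Int.negOnePow_succ, Units.val_neg,
    neg_smul, sub_neg_eq_add, LinearMap.comp_smul]

theorem homDelta_comp_eq_precomp_dAnticomm (f : GMap D E k) (h : GMap D D 1)
    (hf : homDelta k (k - 1) (by omega) f = 0) :
    homDelta (k + 1) k rfl (f.comp h (k + 1) (add_comm 1 k))
      = (k.negOnePow : ℤ) • GMap.precomp f h.dAnticomm := by
  funext m n hmn
  have hcycle := congrFun (congrFun (congrFun hf (m + 1)) n) (by omega)
  rw [homDelta_apply_of_eq (a := n + 1) (b := m) _ _ _ (by omega) (by omega) rfl (by omega),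
    GMap.zero_apply, sub_eq_zero] at hcycle
  rw [homDelta_apply_of_eq (a := n + 1) (b := m - 1) _ _ _ (by omega) rfl (by omega) (by omega),
    GMap.comp_apply_of_eq (b := m + 1) _ _ _ _ rfl (by omega),
    GMap.comp_apply_of_eq (b := m) _ _ _ _ (by omega) hmn]
  rw [GMap.zsmul_apply, GMap.precomp, GMap.dAnticomm, LinearMap.comp_add,
    ← LinearMap.comp_assoc, hcycle, Int.negOnePow_succ, Units.val_neg, neg_smul, sub_neg_eq_add,
    LinearMap.smul_comp, smul_add, LinearMap.comp_assoc, LinearMap.comp_assoc]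

end Homotopy

namespace DefRetract

variable {R : Type} [CommRing R] {C₂ C₁ : Cx R} (ρ : DefRetract C₂ C₁) {k r s : ℤ}

theorem dAnticomm_h : ρ.h.dAnticomm = fun m => LinearMap.id - ρ.i.f m ∘ₗ ρ.p.f m :=
  funext fun m => (ρ.homotopy m).symm

def homSection (ψ : GMap C₂ C₂ r) : GMap C₁ C₁ r :=
  GMap.postcomp ρ.i.f (GMap.precomp ψ ρ.p.f)

theorem homDelta_homG (hrs : s + 1 = r) (f : GMap C₁ C₁ r) :
    homDelta r s hrs (homG ρ f) = homG ρ (homDelta r s hrs f) :=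
  (homDelta_postcomp hrs ρ.p _).trans (congrArg _ (homDelta_precomp hrs f ρ.i))

theorem homDelta_homSection (hrs : s + 1 = r) (ψ : GMap C₂ C₂ r) :
    homDelta r s hrs (ρ.homSection ψ) = ρ.homSection (homDelta r s hrs ψ) :=
  (homDelta_postcomp hrs ρ.i _).trans (congrArg _ (homDelta_precomp hrs ψ ρ.p))

theorem homG_homSection (ψ : GMap C₂ C₂ r) : homG ρ (ρ.homSection ψ) = ψ := by
  funext m n hmn
  simp only [homG, homSection, GMap.postcomp, GMap.precomp, ← LinearMap.comp_assoc, ρ.pi]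
  simp only [LinearMap.comp_assoc, ρ.pi, LinearMap.comp_id, LinearMap.id_comp]

theorem homSection_zero : ρ.homSection (0 : GMap C₂ C₂ r) = 0 := by
  funext m n hmn
  simp only [homSection, GMap.postcomp, GMap.precomp, GMap.zero_apply, LinearMap.zero_comp,
    LinearMap.comp_zero]

def homHomotopy (f : GMap C₁ C₁ k) : GMap C₁ C₁ (k + 1) :=
  ρ.h.comp f (k + 1) rfl
    + (k.negOnePow : ℤ) • GMap.postcomp (ρ.i.comp ρ.p).f (f.comp ρ.h (k + 1) (add_comm 1 k))

theorem homDelta_homHomotopy (f : GMap C₁ C₁ k) (hf : homDelta k (k - 1) (by omega) f = 0) :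
    homDelta (k + 1) k rfl (ρ.homHomotopy f) = f - ρ.homSection (homG ρ f) := by
  rw [homHomotopy, homDelta_add, homDelta_zsmul, homDelta_postcomp,
    homDelta_comp_eq_postcomp_dAnticomm _ _ hf, homDelta_comp_eq_precomp_dAnticomm _ _ hf,
    dAnticomm_h]
  funext m n hmn
  simp only [GMap.add_apply, GMap.zsmul_apply, GMap.sub_apply, GMap.postcomp, GMap.precomp,
    ChainMap.comp, homSection, homG, LinearMap.comp_sub, LinearMap.sub_comp, LinearMap.comp_smul,
    smul_smul, ← Units.val_mul, Int.units_mul_self, Units.val_one, one_smul, LinearMap.comp_id,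
    LinearMap.id_comp, LinearMap.comp_assoc]
  abel

end DefRetract

section Statement1

variable {R : Type} [CommRing R]

theorem homG_chain_map_and_quasi_iso {C₂ C₁ : Cx R} (ρ : DefRetract C₂ C₁) :
    -- g is a map of complexes: δ∘g = g∘δ
    (∀ (r s : ℤ) (hrs : s + 1 = r) (f : GMap C₁ C₁ r),
        homDelta r s hrs (homG ρ f) = homG ρ (homDelta r s hrs f)) ∧
    -- g induces an isomorphism on cohomology in every degree k:
    (∀ k : ℤ,
      -- surjectivity on cohomology
      (∀ ψ : GMap C₂ C₂ k, homDelta k (k - 1) (by omega) ψ = 0 →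
        ∃ f : GMap C₁ C₁ k, homDelta k (k - 1) (by omega) f = 0 ∧
          ∃ u : GMap C₂ C₂ (k + 1),
            homG ρ f - ψ = homDelta (k + 1) k (by omega) u) ∧
      -- injectivity on cohomology
      (∀ f : GMap C₁ C₁ k, homDelta k (k - 1) (by omega) f = 0 →
        (∃ u : GMap C₂ C₂ (k + 1), homG ρ f = homDelta (k + 1) k (by omega) u) →
        ∃ v : GMap C₁ C₁ (k + 1), f = homDelta (k + 1) k (by omega) v)) := by
  refine ⟨fun r s hrs f => ρ.homDelta_homG hrs f, fun k => ⟨fun ψ hψ => ?_, ?_⟩⟩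
  · refine ⟨ρ.homSection ψ, ?_, 0, ?_⟩
    · rw [ρ.homDelta_homSection, hψ, ρ.homSection_zero]
    · rw [ρ.homG_homSection, sub_self, homDelta_zero]
  · rintro f hf ⟨u, hu⟩
    refine ⟨ρ.homHomotopy f + ρ.homSection u, ?_⟩
    rw [homDelta_add, ρ.homDelta_homHomotopy f hf, ρ.homDelta_homSection, ← hu, sub_add_cancel]

end Statement1
end

section
/- Let (i, p, h) be a deformation retraction between chain complexes (C₂, d₂) and (C₁, d₁) of modules over a commutative ring. For chain maps a₁, …, aₙ : C₁ → C₁ (n ≥ 1), define the degree-(n−1) graded map Sₙ(a₁, …, aₙ) = p∘a₁∘h∘a₂∘h∘⋯∘h∘aₙ∘i : C₂ → C₂ (with n−1 occurrences of h interleaved between consecutive aₖ). Then for every n ≥ 2: d₂∘Sₙ(a₁,…,aₙ) − (−1)^{n−1} Sₙ(a₁,…,aₙ)∘d₂ = Σ_{k=1}^{n−1} (−1)^{k+1} [ S_{n−1}(a₁,…,a_{k−1}, aₖ∘a_{k+1}, a_{k+2},…,aₙ) − Sₖ(a₁,…,aₖ)∘S_{n−k}(a_{k+1},…,aₙ) ].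 -/
section Statement2

/-!
STATEMENT 2: given a deformation retraction `(i, p, h)` between `(C₂, d₂)` and `(C₁, d₁)`
and chain maps `a₁, …, aₙ : C₁ → C₁` (n ≥ 1), define the degree `n−1` graded map
`Sₙ(a₁,…,aₙ) = p∘a₁∘h∘a₂∘h∘⋯∘h∘aₙ∘i : C₂ → C₂`.  Then for every `n ≥ 2`:
`d₂∘Sₙ − (−1)^{n−1} Sₙ∘d₂
  = Σ_{k=1}^{n−1} (−1)^{k+1} [S_{n−1}(a₁,…,aₖ∘a_{k+1},…,aₙ) − Sₖ(a₁,…,aₖ)∘S_{n−k}(a_{k+1},…,aₙ)]`.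
(Here a family of `m+1` chain maps is indexed by `Fin (m+1)`, so `n = m+2` below.)
-/

variable {R : Type} [CommRing R]

/-- Transport along an equality of degrees. -/
def castMap (C : Cx R) {q r : ℤ} (h : q = r) : C.X q →ₗ[R] C.X r := by
  subst h; exact LinearMap.id

/-- The interleaved core `a₁∘h∘a₂∘h∘⋯∘h∘a_{m+1}` (with `m` occurrences of `h`),
a graded map `C₁ → C₁` of degree `m`. -/
def interCore {C₂ C₁ : Cx R} (ρ : DefRetract C₂ C₁) :
    (m : ℕ) → (Fin (m + 1) → ChainMap C₁ C₁) → GMap C₁ C₁ (m : ℤ)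
  | 0, a => fun q r hqr => (castMap C₁ (show q = r by omega)) ∘ₗ ((a 0).f q)
  | (m + 1), a => fun q r hqr =>
      (castMap C₁ (show q + (m : ℤ) + 1 = r by omega)) ∘ₗ
        ((a 0).f (q + (m : ℤ) + 1)) ∘ₗ
        (ρ.h (q + (m : ℤ)) (q + (m : ℤ) + 1) rfl) ∘ₗ
        (interCore ρ m (fun j => a j.succ) q (q + (m : ℤ)) rfl)

/-- `Sₙ(a₁,…,aₙ) = p∘a₁∘h∘a₂∘h∘⋯∘h∘aₙ∘i : C₂ → C₂`, a graded map of degree `n − 1`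
(here `n = m + 1` maps). -/
def sMap {C₂ C₁ : Cx R} (ρ : DefRetract C₂ C₁) (m : ℕ)
    (a : Fin (m + 1) → ChainMap C₁ C₁) : GMap C₂ C₂ (m : ℤ) :=
  fun q r hqr => (ρ.p.f r) ∘ₗ (interCore ρ m a q r hqr) ∘ₗ (ρ.i.f q)

/-- Composition of graded maps (`f` applied after `g`), with prescribed total degree. -/
def gcompTo {C D E : Cx R} {r s : ℤ} (f : GMap D E r) (g : GMap C D s)
    (t : ℤ) (h : r + s = t) : GMap C E t :=
  fun q u hqu => (f (q + s) u (by omega)) ∘ₗ (g q (q + s) rfl)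

/-- The family `(a₁,…,a_{k−1}, aₖ∘a_{k+1}, a_{k+2},…,a_{m+2})` obtained by merging the
two consecutive entries at position `k`. -/
def mergeFam {C : Cx R} {m : ℕ} (a : Fin (m + 2) → ChainMap C C) (k : Fin (m + 1)) :
    Fin (m + 1) → ChainMap C C :=
  fun j =>
    if (j : ℕ) < (k : ℕ) then a (Fin.castSucc j)
    else if (j : ℕ) = (k : ℕ) then (a (Fin.castSucc k)).comp (a k.succ)
    else a j.succ

/-! ### Auxiliary machinery for the proof -/

section AuxProof

@[simp] theorem castMap_refl_apply (C : Cx R) {q : ℤ} (h : q = q) (x : C.X q) :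
    castMap C h x = x := rfl

@[simp] theorem castMap_castMap_apply (C : Cx R) {q r s : ℤ} (h1 : q = r) (h2 : r = s)
    (x : C.X q) : castMap C h2 (castMap C h1 x) = castMap C (h1.trans h2) x := by
  subst h1; subst h2; rfl

@[simp] theorem cf_cast_apply {C D : Cx R} (b : ChainMap C D) {q r : ℤ} (h : q = r)
    (x : C.X q) : b.f r (castMap C h x) = castMap D h (b.f q x) := by
  subst h; rfl

/-- Off-diagonal value of a graded map in terms of the diagonal one. -/
theorem gmap_off {C D : Cx R} {deg : ℤ} (f : GMap C D deg) {q s : ℤ} (h : q + deg = s)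
    (x : C.X q) : f q s h x = castMap D h (f q (q + deg) rfl x) := by
  subst h; rfl

@[simp] theorem gmap_cast {C D : Cx R} {deg : ℤ} (f : GMap C D deg) {e q r : ℤ}
    (h : e = q) (pf : q + deg = r) (x : C.X e) :
    f q r pf (castMap C h x) = castMap D (by omega) (f e (e + deg) rfl x) := by
  subst h; exact gmap_off f pf x

@[simp] theorem d_cast_apply (C : Cx R) {q r s : ℤ} (hrs : r = s + 1) (h : q = r)
    (x : C.X q) :
    C.d r s hrs (castMap C h x)
      = castMap C (show q - 1 = s by omega) (C.d q (q - 1) (by omega) x) := by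
  subst h
  have hs : s = q - 1 := by omega
  subst hs
  rfl

/-- Differentials move past chain maps. -/
@[simp] theorem d_cf_apply {C D : Cx R} (b : ChainMap C D) {i j : ℤ} (hij : i = j + 1)
    (x : C.X i) : D.d i j hij (b.f i x) = b.f j (C.d i j hij x) :=
  LinearMap.congr_fun (b.comm i j hij) x

variable {C₂ C₁ : Cx R} (ρ : DefRetract C₂ C₁)

@[simp] theorem pi_apply (t : ℤ) (x : C₂.X t) : ρ.p.f t (ρ.i.f t x) = x :=
  LinearMap.congr_fun (ρ.pi t) x

/-- Move a differential to its canonical indices. -/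
theorem d_off (C : Cx R) {i j : ℤ} (hij : i = j + 1) (x : C.X i) :
    C.d i j hij x = castMap C (show i - 1 = j by omega) (C.d i (i - 1) (by omega) x) := by
  have hj : i - 1 = j := by omega
  subst hj
  rfl

/-- The homotopy identity, in the flexible applied form needed for rewriting. -/
theorem dh_gen {s t u : ℤ} (h2 : s + 1 = t) (h1 : t = u + 1) (x : C₁.X s) :
    C₁.d t u h1 (ρ.h s t h2 x)
      = castMap C₁ (show s = u by omega)
          (x - ρ.i.f s (ρ.p.f s x)
            - castMap C₁ (show s - 1 + 1 = s by omega)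
                (ρ.h (s - 1) (s - 1 + 1) rfl (C₁.d s (s - 1) (by omega) x))) := by
  subst h2
  have hu : s = u := by omega
  subst hu
  have h0 := LinearMap.congr_fun (ρ.homotopy s) x
  simp only [LinearMap.sub_apply, LinearMap.add_apply, LinearMap.comp_apply,
    LinearMap.id_apply] at h0
  have h3 : ρ.h (s - 1) s (by omega) (C₁.d s (s - 1) (by omega) x)
      = castMap C₁ (show s - 1 + 1 = s by omega)
          (ρ.h (s - 1) (s - 1 + 1) rfl (C₁.d s (s - 1) (by omega) x)) :=
    gmap_off ρ.h _ _
  have : C₁.d (s + 1) s h1 (ρ.h s (s + 1) rfl x)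
      = (x - ρ.i.f s (ρ.p.f s x)) - ρ.h (s - 1) s (by omega) (C₁.d s (s - 1) (by omega) x) := by
    rw [← sub_eq_iff_eq_add'] at h0
    rw [← h0]
    abel
  rw [h3] at this
  simpa using this

/-- GMap algebra, applied. -/
@[simp] theorem gmap_add_apply {C D : Cx R} {deg : ℤ} (f g : GMap C D deg) (q r : ℤ)
    (h : q + deg = r) : (f + g) q r h = f q r h + g q r h := rfl

@[simp] theorem gmap_sub_apply {C D : Cx R} {deg : ℤ} (f g : GMap C D deg) (q r : ℤ)
    (h : q + deg = r) : (f - g) q r h = f q r h - g q r h := rfl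

@[simp] theorem gmap_neg_apply {C D : Cx R} {deg : ℤ} (f : GMap C D deg) (q r : ℤ)
    (h : q + deg = r) : (-f) q r h = -(f q r h) := rfl

@[simp] theorem gmap_smul_apply {C D : Cx R} {deg : ℤ} (c : ℤ) (f : GMap C D deg) (q r : ℤ)
    (h : q + deg = r) : (c • f) q r h = c • (f q r h) := rfl

@[simp] theorem gmap_zero_apply {C D : Cx R} {deg : ℤ} (q r : ℤ)
    (h : q + deg = r) : (0 : GMap C D deg) q r h = 0 := rfl

@[simp] theorem gmap_sum_apply {C D : Cx R} {deg : ℤ} {ι : Type} (s : Finset ι)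
    (F : ι → GMap C D deg) (q r : ℤ) (h : q + deg = r) :
    (∑ k ∈ s, F k) q r h = ∑ k ∈ s, F k q r h := by
  classical
  induction s using Finset.cons_induction with
  | empty => rfl
  | cons a s ha ih => rw [Finset.sum_cons, Finset.sum_cons, ← ih]; rfl

/-- `hconsG b T = b ∘ h ∘ T`, the basic building block of the interleaved cores. -/
def hconsG (b : ChainMap C₁ C₁) {n : ℤ} (T : GMap C₁ C₁ n) : GMap C₁ C₁ (n + 1) :=
  fun q r _ =>
    castMap C₁ (by omega) ∘ₗ (b.f (q + n + 1)) ∘ₗ (ρ.h (q + n) (q + n + 1) rfl) ∘ₗ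
      (T q (q + n) rfl)

theorem interCore_cons (m : ℕ) (c : Fin (m + 2) → ChainMap C₁ C₁) (q r : ℤ)
    (hqr : q + ((m + 1 : ℕ) : ℤ) = r) :
    interCore ρ (m + 1) c q r hqr
      = hconsG ρ (c 0) (interCore ρ m (fun j => c j.succ)) q r (by omega) := rfl

/-- `interCore` of a family whose head has been multiplied by a chain map. -/
theorem interCore_mul (m : ℕ) (b : ChainMap C₁ C₁) (a a' : Fin (m + 1) → ChainMap C₁ C₁)
    (h0 : a' 0 = b.comp (a 0)) (hs : ∀ j : Fin m, a' j.succ = a j.succ)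
    (q r : ℤ) (hqr : q + (m : ℤ) = r) :
    interCore ρ m a' q r hqr = b.f r ∘ₗ interCore ρ m a q r hqr := by
  cases m with
  | zero =>
    apply LinearMap.ext; intro x
    simp [interCore, h0, ChainMap.comp]
  | succ m =>
    have htail : (fun j : Fin (m + 1) => a' j.succ) = (fun j => a j.succ) := by
      funext j; exact hs j
    apply LinearMap.ext; intro x
    simp [interCore, htail, h0, ChainMap.comp]

/-- The cross term `a₀∘h∘⋯∘aₖ∘(i∘p)∘a_{k+1}∘h∘⋯∘a_{m+1}`, defined recursively. -/
def crossCore : (m : ℕ) → (k : ℕ) → (k ≤ m) → (Fin (m + 2) → ChainMap C₁ C₁) →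
    GMap C₁ C₁ (m : ℤ)
  | m, 0, _, a => fun q r hqr =>
      castMap C₁ hqr ∘ₗ (a 0).f (q + (m : ℤ)) ∘ₗ ρ.i.f (q + (m : ℤ)) ∘ₗ ρ.p.f (q + (m : ℤ)) ∘ₗ
        interCore ρ m (fun j => a j.succ) q (q + (m : ℤ)) rfl
  | m + 1, k + 1, hk, a => fun q r hqr =>
      hconsG ρ (a 0) (crossCore m k (by omega) (fun i => a i.succ)) q r (by omega)

/-- `homDelta` only depends on the degree `r` and the function `f`, and is compatible with
pointwise-equal graded maps of propositionally equal degrees. -/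
theorem homDelta_congr {C D : Cx R} {r1 r2 s1 s2 : ℤ} (hr : r1 = r2)
    (h1 : s1 + 1 = r1) (h2 : s2 + 1 = r2) (f1 : GMap C D r1) (f2 : GMap C D r2)
    (hf : ∀ q r (hq1 : q + r1 = r) (hq2 : q + r2 = r), f1 q r hq1 = f2 q r hq2)
    (q r : ℤ) (hq1 : q + s1 = r) (hq2 : q + s2 = r) :
    homDelta r1 s1 h1 f1 q r hq1 = homDelta r2 s2 h2 f2 q r hq2 := by
  subst hr
  have : f1 = f2 := by
    funext q' r' h'
    exact hf q' r' h' h'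
  subst this
  rfl

/-- The fundamental inductive step: `δ(b∘h∘T) = b∘T − b∘(i∘p)∘T − b∘h∘δ(T)`. -/
theorem delta_hcons (b : ChainMap C₁ C₁) {n s : ℤ} (hs : s + 1 = n) (T : GMap C₁ C₁ n)
    (q r : ℤ) (hqr : q + n = r) :
    homDelta (n + 1) n rfl (hconsG ρ b T) q r hqr
      = b.f r ∘ₗ T q r hqr
        - (castMap C₁ hqr ∘ₗ b.f (q + n) ∘ₗ ρ.i.f (q + n) ∘ₗ ρ.p.f (q + n) ∘ₗ T q (q + n) rfl)
        - hconsG ρ b (homDelta n s hs T) q r (by omega) := by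
  subst hs
  subst hqr
  apply LinearMap.ext; intro x
  simp only [homDelta, hconsG, LinearMap.comp_apply, LinearMap.sub_apply,
    LinearMap.smul_apply]
  rw [gmap_off T (show q - 1 + (s + 1) = q + s by omega)]
  rw [d_off C₁ (show q + (s + 1) = (q + s) + 1 by omega)]
  simp only [dh_gen, d_cast_apply, d_cf_apply, gmap_cast, cf_cast_apply,
    castMap_castMap_apply, castMap_refl_apply, map_add, map_sub, map_zsmul, map_smul,
    Int.negOnePow_succ, Units.val_neg, neg_smul, smul_neg, neg_neg,
    sub_neg_eq_add]
  abel

/-- Head of a merged family at a successor position. -/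
theorem mergeFam_succ_zero {m : ℕ} (a : Fin (m + 3) → ChainMap C₁ C₁) (k : Fin (m + 1)) :
    mergeFam a k.succ 0 = a 0 := by
  have h : ((0 : Fin (m + 2)) : ℕ) < ((k.succ : Fin (m + 2)) : ℕ) := by simp
  simp only [mergeFam, if_pos h]
  exact congrArg a (by ext; simp)

/-- Shifting a merge past the head of the family. -/
theorem mergeFam_succ_succ {m : ℕ} (a : Fin (m + 3) → ChainMap C₁ C₁) (k : Fin (m + 1))
    (j : Fin (m + 1)) :
    mergeFam a k.succ j.succ = mergeFam (fun i => a i.succ) k j := by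
  simp only [mergeFam, Fin.val_succ]
  rcases lt_trichotomy (j : ℕ) (k : ℕ) with h | h | h
  · rw [if_pos (by omega), if_pos (by omega)]
    exact congrArg a (by ext; simp)
  · rw [if_neg (by omega), if_pos (by omega), if_neg (by omega), if_pos (by omega)]
    have hjk : j = k := Fin.ext h
    subst hjk
    exact congrArg (fun t => (a t).comp (a j.succ.succ)) (by ext; simp)
  · rw [if_neg (by omega), if_neg (by omega), if_neg (by omega), if_neg (by omega)]

/-- Merging at position `0` multiplies the head into the tail core. -/
theorem interCore_merge_zero (m : ℕ) (a : Fin (m + 2) → ChainMap C₁ C₁) (q r : ℤ)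
    (hqr : q + (m : ℤ) = r) :
    interCore ρ m (mergeFam a 0) q r hqr
      = (a 0).f r ∘ₗ interCore ρ m (fun j => a j.succ) q r hqr := by
  apply interCore_mul ρ m (a 0) (fun j => a j.succ) (mergeFam a 0)
  · have h0 : ¬ (((0 : Fin (m + 1)) : ℕ) < ((0 : Fin (m + 1)) : ℕ)) := by simp
    simp only [mergeFam, if_neg h0, if_pos rfl]
    exact congrArg (fun t => (a t).comp (a (0 : Fin (m + 1)).succ)) (by ext; simp)
  · intro j
    have h1 : ¬ ((j.succ : ℕ) < ((0 : Fin (m + 1)) : ℕ)) := by simp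
    have h2 : ¬ ((j.succ : ℕ) = ((0 : Fin (m + 1)) : ℕ)) := by simp
    simp only [mergeFam, if_neg h1, if_neg h2]

theorem interCore_merge_succ (m : ℕ) (a : Fin (m + 3) → ChainMap C₁ C₁) (k : Fin (m + 1))
    (q r : ℤ) (hqr : q + ((m + 1 : ℕ) : ℤ) = r) :
    interCore ρ (m + 1) (mergeFam a k.succ) q r hqr
      = hconsG ρ (a 0) (interCore ρ m (mergeFam (fun i => a i.succ) k)) q r (by omega) := by
  rw [interCore_cons]
  rw [mergeFam_succ_zero]
  have hfam : (fun j : Fin (m + 1) => mergeFam a k.succ j.succ)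
      = mergeFam (fun i => a i.succ) k := by
    funext j; exact mergeFam_succ_succ a k j
  rw [hfam]

/-- Defining equations for `crossCore`. -/
theorem crossCore_zero (m : ℕ) (hk : 0 ≤ m) (a : Fin (m + 2) → ChainMap C₁ C₁) :
    crossCore ρ m 0 hk a
      = fun q r hqr =>
          castMap C₁ hqr ∘ₗ (a 0).f (q + (m : ℤ)) ∘ₗ ρ.i.f (q + (m : ℤ)) ∘ₗ
            ρ.p.f (q + (m : ℤ)) ∘ₗ
            interCore ρ m (fun j => a j.succ) q (q + (m : ℤ)) rfl := by
  cases m <;> rfl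

theorem crossCore_succ (m k : ℕ) (hk : k + 1 ≤ m + 1) (a : Fin (m + 3) → ChainMap C₁ C₁)
    (q r : ℤ) (hqr : q + ((m + 1 : ℕ) : ℤ) = r) :
    crossCore ρ (m + 1) (k + 1) hk a q r hqr
      = hconsG ρ (a 0) (crossCore ρ m k (by omega) (fun i => a i.succ)) q r (by omega) := rfl

/-- The delta of a degree-0 core vanishes (it is a chain map). -/
theorem delta_interCore_zero (fam : Fin 1 → ChainMap C₁ C₁) (s : ℤ)
    (hs : s + 1 = ((0 : ℕ) : ℤ)) (q r : ℤ) (hqr : q + s = r) :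
    homDelta ((0 : ℕ) : ℤ) s hs (interCore ρ 0 fam) q r hqr = 0 := by
  apply LinearMap.ext; intro x
  simp [homDelta, interCore]

set_option maxHeartbeats 1600000 in
/-- The core differential identity, proved by induction. -/
theorem coreDelta (m : ℕ) :
    ∀ (a : Fin (m + 2) → ChainMap C₁ C₁) (q r : ℤ) (hqr : q + ((m : ℕ) : ℤ) = r),
    homDelta ((m + 1 : ℕ) : ℤ) ((m : ℕ) : ℤ) (by omega) (interCore ρ (m + 1) a) q r hqr
      = ∑ k : Fin (m + 1), ((-1 : ℤ) ^ (k : ℕ)) •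
          (interCore ρ m (mergeFam a k) q r hqr
            - crossCore ρ m (k : ℕ) (by omega) a q r hqr) := by
  induction m with
  | zero =>
    intro a q r hqr
    rw [homDelta_congr (show ((0 + 1 : ℕ) : ℤ) = ((0 : ℕ) : ℤ) + 1 by omega) (by omega) rfl
      (interCore ρ (0 + 1) a) (hconsG ρ (a 0) (interCore ρ 0 (fun j => a j.succ)))
      (fun q' r' h1 h2 => interCore_cons ρ 0 a q' r' h1) q r hqr (by omega)]
    rw [delta_hcons ρ (a 0) (show ((0 : ℕ) : ℤ) - 1 + 1 = ((0 : ℕ) : ℤ) by omega)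
      (interCore ρ 0 (fun j => a j.succ)) q r hqr]
    have hz : hconsG ρ (a 0)
        (homDelta ((0 : ℕ) : ℤ) (((0 : ℕ) : ℤ) - 1) (by omega)
          (interCore ρ 0 (fun j => a j.succ))) q r (by omega) = 0 := by
      show castMap C₁ _ ∘ₗ _ ∘ₗ _ ∘ₗ
        (homDelta ((0 : ℕ) : ℤ) (((0 : ℕ) : ℤ) - 1) (by omega)
          (interCore ρ 0 (fun j => a j.succ))) q (q + (((0 : ℕ) : ℤ) - 1)) rfl = 0
      rw [delta_interCore_zero]
      simp
    rw [hz]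
    rw [Fin.sum_univ_one]
    rw [interCore_merge_zero ρ 0 a q r hqr]
    simp [crossCore_zero]
  | succ m ih =>
    intro a q r hqr
    rw [homDelta_congr (show ((m + 1 + 1 : ℕ) : ℤ) = ((m + 1 : ℕ) : ℤ) + 1 by omega) (by omega)
      rfl (interCore ρ (m + 1 + 1) a) (hconsG ρ (a 0) (interCore ρ (m + 1) (fun j => a j.succ)))
      (fun q' r' h1 h2 => interCore_cons ρ (m + 1) a q' r' h1) q r hqr (by omega)]
    rw [delta_hcons ρ (a 0) (show ((m : ℕ) : ℤ) + 1 = ((m + 1 : ℕ) : ℤ) by omega)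
      (interCore ρ (m + 1) (fun j => a j.succ)) q r hqr]
    rw [Fin.sum_univ_succ]
    rw [interCore_merge_zero ρ (m + 1) a q r hqr]
    simp only [Fin.val_zero, pow_zero, one_smul, Fin.val_succ]
    rw [Finset.sum_congr rfl (fun (k : Fin (m + 1)) _ => by
      rw [interCore_merge_succ ρ m a k q r hqr,
          crossCore_succ ρ m (k : ℕ) (by omega) a q r hqr])]
    have hih := ih (fun j => a j.succ) q (q + ((m : ℕ) : ℤ)) rfl
    apply LinearMap.ext; intro x
    simp only [hconsG, crossCore_zero, LinearMap.comp_apply, LinearMap.sub_apply,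
      LinearMap.add_apply, LinearMap.smul_apply, LinearMap.sum_apply]
    rw [hih]
    simp only [LinearMap.sum_apply, LinearMap.smul_apply, LinearMap.sub_apply,
      map_sum, map_zsmul, map_sub, map_add, pow_succ, mul_neg_one, neg_smul,
      Finset.sum_neg_distrib, smul_sub]
    simp only [neg_sub_neg, Finset.sum_sub_distrib]
    abel

set_option maxHeartbeats 1600000 in
/-- Closed form of `crossCore`. -/
theorem crossCore_closed : ∀ (k d m : ℕ) (hm : m = k + d) (hk : k ≤ m)
    (a : Fin (m + 2) → ChainMap C₁ C₁) (q r : ℤ) (hqr : q + (m : ℤ) = r),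
    crossCore ρ m k hk a q r hqr
      = castMap C₁ (by omega) ∘ₗ
          interCore ρ k (fun j : Fin (k + 1) => a ⟨(j : ℕ), by omega⟩)
            (q + (d : ℤ)) (q + (d : ℤ) + (k : ℕ)) rfl ∘ₗ
          ρ.i.f (q + (d : ℤ)) ∘ₗ ρ.p.f (q + (d : ℤ)) ∘ₗ
          interCore ρ d (fun j : Fin (d + 1) => a ⟨k + 1 + (j : ℕ), by omega⟩)
            q (q + (d : ℤ)) rfl := by
  intro k
  induction k with
  | zero =>
    intro d m hm hk a q r hqr
    have hd : m = d := by omega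
    subst hd
    have hf1 : (fun j : Fin (0 + 1) => a ⟨(j : ℕ), by omega⟩) = fun _ => a 0 := by
      funext j
      exact congrArg a (by ext; simp <;> omega)
    have hf2 : (fun j : Fin (m + 1) => a ⟨0 + 1 + (j : ℕ), by omega⟩)
        = fun j : Fin (m + 1) => a j.succ := by
      funext j
      exact congrArg a (by ext; simp <;> omega)
    rw [crossCore_zero, hf1, hf2]
    apply LinearMap.ext; intro x
    simp [interCore]
  | succ k ihk =>
    intro d m hm hk a q r hqr
    cases m with
    | zero => exact absurd hm (by omega)
    | succ m =>
      rw [crossCore_succ ρ m k hk a q r hqr]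
      have hfam0 : a ⟨((0 : Fin (k + 1 + 1)) : ℕ), by omega⟩ = a 0 :=
        congrArg a (by ext; simp)
      have hftail : (fun j : Fin (k + 1) => a ⟨((j.succ : Fin (k + 1 + 1)) : ℕ), by omega⟩)
          = (fun j : Fin (k + 1) => (fun i : Fin (m + 2) => a i.succ) ⟨(j : ℕ), by omega⟩) := by
        funext j
        exact congrArg a (by ext; simp <;> omega)
      have hf2 : (fun j : Fin (d + 1) => a ⟨k + 1 + 1 + (j : ℕ), by omega⟩)
          = (fun j : Fin (d + 1) =>
              (fun i : Fin (m + 2) => a i.succ) ⟨k + 1 + (j : ℕ), by omega⟩) := by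
        funext j
        exact congrArg a (by ext; simp <;> omega)
      rw [hf2]
      rw [interCore_cons ρ k (fun j : Fin (k + 1 + 1) => a ⟨(j : ℕ), by omega⟩)]
      rw [hfam0, hftail]
      apply LinearMap.ext; intro x
      simp only [hconsG, LinearMap.comp_apply]
      rw [ihk d m (by omega) (by omega) (fun i => a i.succ) q (q + ((m : ℕ) : ℤ)) rfl]
      simp only [LinearMap.comp_apply, gmap_cast, cf_cast_apply, castMap_castMap_apply,
        castMap_refl_apply]

@[simp] theorem sMap_apply (mm : ℕ) (fam : Fin (mm + 1) → ChainMap C₁ C₁) (q r : ℤ)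
    (hqr : q + (mm : ℤ) = r) (x : C₂.X q) :
    sMap ρ mm fam q r hqr x = ρ.p.f r (interCore ρ mm fam q r hqr (ρ.i.f q x)) := rfl

theorem cross_assemble (mm kk : ℕ) (hk : kk ≤ mm) (a : Fin (mm + 2) → ChainMap C₁ C₁)
    (q r : ℤ) (hqr : q + (mm : ℤ) = r) (x : C₂.X q) :
    ρ.p.f r (crossCore ρ mm kk hk a q r hqr (ρ.i.f q x))
      = gcompTo (sMap ρ kk (fun j : Fin (kk + 1) => a ⟨(j : ℕ), by omega⟩))
          (sMap ρ (mm - kk) (fun j : Fin ((mm - kk) + 1) => a ⟨kk + 1 + (j : ℕ), by omega⟩))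
          ((mm : ℕ) : ℤ) (by omega) q r hqr x := by
  rw [crossCore_closed ρ kk (mm - kk) mm (by omega) hk a q r hqr]
  simp only [gcompTo, sMap, LinearMap.comp_apply]
  rw [gmap_off (interCore ρ kk (fun j : Fin (kk + 1) => a ⟨(j : ℕ), by omega⟩))
    (show (q + ((mm - kk : ℕ) : ℤ)) + ((kk : ℕ) : ℤ) = r by omega)]

end AuxProof

theorem sMap_differential_identity {C₂ C₁ : Cx R} (ρ : DefRetract C₂ C₁)
    (m : ℕ) (a : Fin (m + 2) → ChainMap C₁ C₁) :
    homDelta ((m + 1 : ℕ) : ℤ) ((m : ℕ) : ℤ) (by omega) (sMap ρ (m + 1) a)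
      = ∑ k : Fin (m + 1), ((-1 : ℤ) ^ (k : ℕ)) •
          (sMap ρ m (mergeFam a k)
            - gcompTo
                (sMap ρ (k : ℕ) (fun j : Fin ((k : ℕ) + 1) => a ⟨(j : ℕ), by omega⟩))
                (sMap ρ (m - (k : ℕ)) (fun j : Fin ((m - (k : ℕ)) + 1) =>
                  a ⟨(k : ℕ) + 1 + (j : ℕ), by omega⟩))
                ((m : ℕ) : ℤ) (by omega)) := by
  funext q r hqr
  apply LinearMap.ext; intro x
  have keyx := congrArg (ρ.p.f r)
    (LinearMap.congr_fun (coreDelta ρ m a q r hqr) (ρ.i.f q x))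
  simp only [homDelta, LinearMap.sum_apply, LinearMap.smul_apply, LinearMap.sub_apply,
    LinearMap.comp_apply, map_sub, map_zsmul, map_sum, cross_assemble] at keyx
  simp only [homDelta, LinearMap.sub_apply, LinearMap.smul_apply, LinearMap.comp_apply,
    gmap_sum_apply, gmap_smul_apply, gmap_sub_apply, LinearMap.sum_apply, sMap_apply,
    d_cf_apply]
  rw [← d_cf_apply ρ.i (show q = (q - 1) + 1 by omega) x]
  exact keyx

end Statement2
end

section
/- Let (i, p, h) be a deformation retraction between chain complexes (C₂, d₂) and (C₁, d₁) of modules over a commutative ring, and let a, b : C₁ → C₁ be chain maps. Then the degree +1 map K = p∘a∘h∘b∘i : C₂ → C₂ is an explicit homotopy witnessing that p∘(a∘b)∘i and (p∘a∘i)∘(p∘b∘i) are homotopic chain maps: p∘a∘b∘i − (p∘a∘i)∘(p∘b∘i) = d₂∘K + K∘d₂. -/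
section Statement3

/-!
STATEMENT 3: given a deformation retraction `(i, p, h)` between `(C₂, d₂)` and `(C₁, d₁)`
and chain maps `a, b : C₁ → C₁`, the degree `+1` map `K = p∘a∘h∘b∘i` is an explicit
homotopy between `p∘(a∘b)∘i` and `(p∘a∘i)∘(p∘b∘i)`:
`p∘a∘b∘i − (p∘a∘i)∘(p∘b∘i) = d₂∘K + K∘d₂`.
-/

variable {R : Type} [CommRing R]

/-- The conjugation `a ↦ p∘a∘i` of a chain map by a deformation retraction. -/
def conjByRetract {C₂ C₁ : Cx R} (ρ : DefRetract C₂ C₁) (a : ChainMap C₁ C₁) :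
    ChainMap C₂ C₂ :=
  (ρ.p.comp a).comp ρ.i

/-- The degree `+1` graded map `K = p∘a∘h∘b∘i : C₂ → C₂`. -/
def explicitHomotopy {C₂ C₁ : Cx R} (ρ : DefRetract C₂ C₁) (a b : ChainMap C₁ C₁) :
    GMap C₂ C₂ 1 :=
  fun m n hmn => (ρ.p.f n) ∘ₗ (a.f n) ∘ₗ (ρ.h m n hmn) ∘ₗ (b.f m) ∘ₗ (ρ.i.f m)

theorem explicit_homotopy_for_products {C₂ C₁ : Cx R} (ρ : DefRetract C₂ C₁)
    (a b : ChainMap C₁ C₁) :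
    ∀ m : ℤ,
      (conjByRetract ρ (a.comp b)).f m
          - ((conjByRetract ρ a).comp (conjByRetract ρ b)).f m
        = (C₂.d (m + 1) m rfl) ∘ₗ (explicitHomotopy ρ a b m (m + 1) rfl)
          + (explicitHomotopy ρ a b (m - 1) m (by omega)) ∘ₗ (C₂.d m (m - 1) (by omega)) := by
  intro m
  ext x
  simp only [conjByRetract, explicitHomotopy, ChainMap.comp, LinearMap.sub_apply,
    LinearMap.add_apply, LinearMap.comp_apply]
  have hz := LinearMap.congr_fun (ρ.homotopy m) (b.f m (ρ.i.f m x))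
  simp only [LinearMap.sub_apply, LinearMap.add_apply, LinearMap.comp_apply,
    LinearMap.id_apply] at hz
  have ha : ∀ w : C₁.X (m + 1), a.f m (C₁.d (m + 1) m rfl w)
      = C₁.d (m + 1) m rfl (a.f (m + 1) w) :=
    fun w => (LinearMap.congr_fun (a.comm (m + 1) m rfl) w).symm
  have hp : ∀ w : C₁.X (m + 1), ρ.p.f m (C₁.d (m + 1) m rfl w)
      = C₂.d (m + 1) m rfl (ρ.p.f (m + 1) w) :=
    fun w => (LinearMap.congr_fun (ρ.p.comm (m + 1) m rfl) w).symm
  have hb : ∀ u : C₁.X m, C₁.d m (m - 1) (by omega) (b.f m u)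
      = b.f (m - 1) (C₁.d m (m - 1) (by omega) u) :=
    fun u => LinearMap.congr_fun (b.comm m (m - 1) (by omega)) u
  have hi : C₁.d m (m - 1) (by omega) (ρ.i.f m x)
      = ρ.i.f (m - 1) (C₂.d m (m - 1) (by omega) x) :=
    LinearMap.congr_fun (ρ.i.comm m (m - 1) (by omega)) x
  rw [← map_sub (ρ.p.f m), ← map_sub (a.f m), hz, map_add (a.f m), map_add (ρ.p.f m),
    ha, hp, hb, hi]

end Statement3
end

section
/- Let (i, p, h) be a deformation retraction between chain complexes (C₂, d₂) and (C₁, d₁) of modules over a commutative ring, and let a : C₁ → C₁ be a chain map with p∘a∘i = 0. Then a is null-homotopic: there exists a degree +1 graded map K : C₁ → C₁ with a = d₁∘K + K∘d₁. -/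
section Statement4

/-!
STATEMENT 4: given a deformation retraction `(i, p, h)` between `(C₂, d₂)` and `(C₁, d₁)`
and a chain map `a : C₁ → C₁` with `p∘a∘i = 0`, the map `a` is null-homotopic:
there is a degree `+1` graded map `K` with `a = d₁∘K + K∘d₁`.
-/

variable {R : Type} [CommRing R]

theorem null_homotopic_of_conjugate_zero {C₂ C₁ : Cx R} (ρ : DefRetract C₂ C₁)
    (a : ChainMap C₁ C₁)
    (hpai : ∀ m : ℤ, (ρ.p.f m) ∘ₗ (a.f m) ∘ₗ (ρ.i.f m) = 0) :
    ∃ K : GMap C₁ C₁ 1, ∀ m : ℤ,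
      a.f m
        = (C₁.d (m + 1) m rfl) ∘ₗ (K m (m + 1) rfl)
          + (K (m - 1) m (by omega)) ∘ₗ (C₁.d m (m - 1) (by omega)) := by
  refine ⟨fun m n hmn =>
    a.f n ∘ₗ ρ.h m n hmn + ρ.h m n hmn ∘ₗ (a.f m ∘ₗ (ρ.i.f m ∘ₗ ρ.p.f m)), fun m => ?_⟩
  ext x
  set y := a.f m (ρ.i.f m (ρ.p.f m x)) with hy
  -- pointwise homotopy at x
  have F1 := LinearMap.congr_fun (ρ.homotopy m) x
  simp only [LinearMap.sub_apply, LinearMap.id_apply, LinearMap.add_apply,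
    LinearMap.comp_apply] at F1
  -- pointwise homotopy at y, with i (p y) = 0
  have F2 := LinearMap.congr_fun (ρ.homotopy m) y
  simp only [LinearMap.sub_apply, LinearMap.id_apply, LinearMap.add_apply,
    LinearMap.comp_apply] at F2
  have hz : ρ.p.f m y = 0 := by
    have := LinearMap.congr_fun (hpai m) (ρ.p.f m x)
    simpa [hy] using this
  rw [hz, map_zero, sub_zero] at F2
  -- chain map commutation facts
  have F3 := LinearMap.congr_fun (a.comm (m+1) m rfl) (ρ.h m (m+1) rfl x)
  simp only [LinearMap.comp_apply] at F3
  have F4 : C₁.d m (m-1) (by omega) y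
      = a.f (m-1) (ρ.i.f (m-1) (ρ.p.f (m-1) (C₁.d m (m-1) (by omega) x))) := by
    have ha := LinearMap.congr_fun (a.comm m (m-1) (by omega)) (ρ.i.f m (ρ.p.f m x))
    have hi := LinearMap.congr_fun (ρ.i.comm m (m-1) (by omega)) (ρ.p.f m x)
    have hp := LinearMap.congr_fun (ρ.p.comm m (m-1) (by omega)) x
    simp only [LinearMap.comp_apply] at ha hi hp
    rw [hy, ha, hi, hp]
  have F5 := congrArg (a.f m) F1
  simp only [map_sub, map_add] at F5
  rw [← hy] at F5
  simp only [LinearMap.add_apply, LinearMap.comp_apply, map_add]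
  rw [F3, ← hy, ← F4]
  calc a.f m x = (a.f m x - y) + y := by abel
    _ = (a.f m (C₁.d (m+1) m rfl (ρ.h m (m+1) rfl x))
          + a.f m (ρ.h (m-1) m (by omega) (C₁.d m (m-1) (by omega) x)))
        + (C₁.d (m+1) m rfl (ρ.h m (m+1) rfl y)
          + ρ.h (m-1) m (by omega) (C₁.d m (m-1) (by omega) y)) := by rw [F5, ← F2]
    _ = _ := by abel


end Statement4
end

section
/- Let R = ℂ[x₁,…,x_N], W ∈ R, σ the 2n×2n block-diagonal matrix with blocks (1_n, −1_n), and D a matrix factorisation of W of size 2n. Define the supertrace of a 2n×2n matrix M by str(M) = tr(σ·M), and let ∂ᵢD denote the entrywise partial derivative of D with respect to xᵢ. Then for every odd 2n×2n matrix χ, setting ψ = D·χ + χ·D (the BRST coboundary of χ), the element str(ψ·(∂₁D)·(∂₂D)·⋯·(∂_ND)) of R lies in the Jacobian ideal (∂₁W,…,∂_NW). In particular the boundary-bulk map ψ ↦ (−1)^{N choose 2}·str(ψ·∂₁D⋯∂_ND) sends BRST-exact morphisms to zero in Jac(W), hence is well defined on BRST cohomology. -/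
/-!
STATEMENT 12: For `R = ℂ[x₁,…,x_N]`, `W ∈ R`, σ the 2n×2n block-diagonal sign matrix,
`D` a matrix factorisation of `W`, `str(M) = tr(σ·M)` and `∂ᵢD` the entrywise partial
derivative: for every odd matrix χ, setting `ψ = D·χ + χ·D`, the polynomial
`str(ψ·∂₁D·∂₂D⋯∂_ND)` lies in the Jacobian ideal; in particular the boundary-bulk map
sends BRST-exact morphisms to zero in `Jac(W)`.
-/

/-- The 2n×2n block-diagonal sign matrix with blocks `1ₙ` and `−1ₙ`. -/
noncomputable def signMatrix (R : Type) [CommRing R] (n : ℕ) :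
    Matrix (Fin n ⊕ Fin n) (Fin n ⊕ Fin n) R :=
  Matrix.fromBlocks 1 0 0 (-1)

/-- The supertrace `str(M) = tr(σ·M)`. -/
noncomputable def supertrace {R : Type} [CommRing R] {n : ℕ}
    (M : Matrix (Fin n ⊕ Fin n) (Fin n ⊕ Fin n) R) : R :=
  Matrix.trace (signMatrix R n * M)

section helpers
variable {R : Type} [CommRing R] {n : ℕ}
local notation "σ" => signMatrix R n
abbrev Mat (R : Type) [CommRing R] (n : ℕ) := Matrix (Fin n ⊕ Fin n) (Fin n ⊕ Fin n) R

lemma sig_sq : σ * σ = (1 : Mat R n) := by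
  simp [signMatrix, Matrix.fromBlocks_multiply]

lemma str_add (A B : Mat R n) : supertrace (A + B) = supertrace A + supertrace B := by
  simp [supertrace, Matrix.mul_add]

lemma str_sub (A B : Mat R n) : supertrace (A - B) = supertrace A - supertrace B := by
  simp [supertrace, Matrix.mul_sub]

lemma str_smul (c : R) (A : Mat R n) : supertrace (c • A) = c * supertrace A := by
  simp [supertrace, Matrix.mul_smul, smul_eq_mul]

lemma conjσ_mul (A B : Mat R n) : σ * (A * B) * σ = (σ * A * σ) * (σ * B * σ) := by
  simp only [← Matrix.mul_assoc]
  rw [Matrix.mul_assoc (σ * A) σ σ, sig_sq, Matrix.mul_one]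

lemma str_cyc_odd (A B : Mat R n) (hB : σ * B * σ = -B) :
    supertrace (A * B) = -supertrace (B * A) := by
  have hBσ : B * σ = -(σ * B) := by
    have h := congrArg (σ * ·) hB
    simp only [← Matrix.mul_assoc, sig_sq, Matrix.one_mul, Matrix.mul_neg] at h
    exact h
  unfold supertrace
  rw [← Matrix.mul_assoc, Matrix.trace_mul_comm (σ * A) B, ← Matrix.mul_assoc, hBσ,
    Matrix.neg_mul, Matrix.trace_neg, Matrix.mul_assoc]

end helpers

section helpers2
variable {R : Type} [CommRing R] {n : ℕ}
local notation "σ" => signMatrix R n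

lemma conjσ_list_prod (L : List (Mat R n)) (h : ∀ M ∈ L, σ * M * σ = -M) :
    σ * L.prod * σ = ((-1 : R) ^ L.length) • L.prod := by
  induction L with
  | nil => simp [sig_sq]
  | cons M L ih =>
      have hM := h M (by simp)
      have hL := ih (fun M hM => h M (by simp [hM]))
      simp only [List.prod_cons, List.length_cons, conjσ_mul, hM, hL]
      rw [pow_succ]
      simp [Matrix.mul_smul, Matrix.neg_mul, Matrix.mul_neg, mul_comm]

end helpers2

section helpers3
variable {n : ℕ}

lemma str_odd_zero {N : ℕ} {M : Mat (MvPolynomial (Fin N) ℂ) n}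
    (hM : signMatrix (MvPolynomial (Fin N) ℂ) n * M * signMatrix (MvPolynomial (Fin N) ℂ) n
      = -M) : supertrace M = 0 := by
  set σ' : Mat (MvPolynomial (Fin N) ℂ) n := signMatrix (MvPolynomial (Fin N) ℂ) n with hσ'
  have hss : σ' * σ' = 1 := sig_sq
  have hMσ : M * σ' = -(σ' * M) := by
    have h := congrArg (σ' * ·) hM
    simp only [← Matrix.mul_assoc, hss, Matrix.one_mul, Matrix.mul_neg] at h
    exact h
  have h2 : supertrace M = -supertrace M := by
    have h3 := Matrix.trace_mul_comm σ' M
    rw [hMσ, Matrix.trace_neg] at h3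
    exact h3
  have : (2 : MvPolynomial (Fin N) ℂ) * supertrace M = 0 := by linear_combination h2
  rcases mul_eq_zero.mp this with h | h
  · exact absurd h two_ne_zero
  · exact h

end helpers3

section pder
variable {N n : ℕ}
local notation "R'" => MvPolynomial (Fin N) ℂ

lemma map_pderiv_mul (A B : Mat R' n) (k : Fin N) :
    (A * B).map ⇑(MvPolynomial.pderiv k)
      = A.map ⇑(MvPolynomial.pderiv k) * B + A * B.map ⇑(MvPolynomial.pderiv k) := by
  refine Matrix.ext fun i j => ?_
  simp only [Matrix.mul_apply, Matrix.map_apply, Matrix.add_apply, Fintype.sum_sum_type,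
    map_add, map_sum, MvPolynomial.pderiv_mul, Finset.sum_add_distrib]
  ring

lemma sig_map_pderiv (k : Fin N) :
    (signMatrix R' n).map ⇑(MvPolynomial.pderiv k) = 0 := by
  refine Matrix.ext fun i j => ?_
  rcases i with i | i <;> rcases j with j | j <;>
    simp [signMatrix, Matrix.map_apply, Matrix.one_apply] <;>
    split_ifs <;> simp

end pder

section keylemma
variable {N n : ℕ}
local notation "R'" => MvPolynomial (Fin N) ℂ

lemma key (J : Ideal R') (D : Mat R' n) (L : List (Mat R' n))
    (hL : ∀ M ∈ L, ∃ c ∈ J, D * M + M * D = c • (1 : Mat R' n)) :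
    ∀ X : Mat R' n,
      supertrace (X * (D * L.prod)) - (-1 : R') ^ L.length * supertrace (X * L.prod * D) ∈ J := by
  induction L with
  | nil =>
      intro X
      simp [Matrix.mul_one]
  | cons M L ih =>
      intro X
      obtain ⟨c, hc, hcomm⟩ := hL M (by simp)
      have hDM : D * M = c • (1 : Mat R' n) - M * D := eq_sub_of_add_eq hcomm
      have e1 : X * (D * (M :: L).prod) = c • (X * L.prod) - (X * M) * (D * L.prod) := by
        rw [List.prod_cons, ← Matrix.mul_assoc D M, hDM, Matrix.sub_mul, Matrix.mul_sub]
        rw [Matrix.smul_mul, Matrix.one_mul, Matrix.mul_smul]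
        simp only [Matrix.mul_assoc]
      have e2 : X * (M :: L).prod * D = (X * M) * L.prod * D := by
        rw [List.prod_cons, ← Matrix.mul_assoc X M]
      have ihX := ih (fun M' hM' => hL M' (by simp [hM'])) (X * M)
      set t1 := supertrace ((X * M) * (D * L.prod)) with ht1
      set t2 := supertrace ((X * M) * L.prod * D) with ht2
      set s := supertrace (X * L.prod) with hs
      have e3 : supertrace (X * (D * (M :: L).prod))
          - (-1 : R') ^ (M :: L).length * supertrace (X * (M :: L).prod * D)
          = c * s - (t1 - (-1 : R') ^ L.length * t2) := by
        rw [e1, e2, str_sub, str_smul, List.length_cons, pow_succ]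
        ring
      rw [e3]
      exact J.sub_mem (Ideal.mul_mem_right s J hc) ihX

lemma DM_odd (D : Mat R' n)
    (hDodd : signMatrix R' n * D * signMatrix R' n = -D) (i : Fin N) :
    signMatrix R' n * D.map ⇑(MvPolynomial.pderiv i) * signMatrix R' n
      = -(D.map ⇑(MvPolynomial.pderiv i)) := by
  have h := congrArg (fun A : Mat R' n => A.map ⇑(MvPolynomial.pderiv i)) hDodd
  simp only [map_pderiv_mul, sig_map_pderiv, Matrix.zero_mul, Matrix.mul_zero, zero_add,
    add_zero] at h
  rw [h]
  refine Matrix.ext fun a b => ?_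
  simp [Matrix.map_apply]

lemma anticomm (W : MvPolynomial (Fin N) ℂ) (D : Mat R' n)
    (hDD : D * D = W • (1 : Mat R' n)) (i : Fin N) :
    D * D.map ⇑(MvPolynomial.pderiv i) + D.map ⇑(MvPolynomial.pderiv i) * D
      = (MvPolynomial.pderiv i W) • (1 : Mat R' n) := by
  have h := congrArg (fun A : Mat R' n => A.map ⇑(MvPolynomial.pderiv i)) hDD
  simp only [map_pderiv_mul] at h
  rw [add_comm] at h
  rw [h]
  ext a b
  simp only [Matrix.map_apply, Matrix.smul_apply, Matrix.one_apply, smul_eq_mul, mul_ite,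
    mul_one, mul_zero]
  split_ifs <;> simp

end keylemma


theorem boundary_bulk_well_defined (N : ℕ) (hN : 1 ≤ N) (n : ℕ) (hn : 1 ≤ n)
    (W : MvPolynomial (Fin N) ℂ)
    (D : Matrix (Fin n ⊕ Fin n) (Fin n ⊕ Fin n) (MvPolynomial (Fin N) ℂ))
    (hDodd : signMatrix (MvPolynomial (Fin N) ℂ) n * D * signMatrix (MvPolynomial (Fin N) ℂ) n
        = -D)
    (hDD : D * D = W • (1 : Matrix (Fin n ⊕ Fin n) (Fin n ⊕ Fin n) (MvPolynomial (Fin N) ℂ)))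
    (χ : Matrix (Fin n ⊕ Fin n) (Fin n ⊕ Fin n) (MvPolynomial (Fin N) ℂ))
    (hχodd : signMatrix (MvPolynomial (Fin N) ℂ) n * χ * signMatrix (MvPolynomial (Fin N) ℂ) n
        = -χ) :
    -- str((D·χ + χ·D)·∂₁D·∂₂D⋯∂_ND) lies in the Jacobian ideal
    supertrace ((D * χ + χ * D)
        * (List.ofFn fun i : Fin N => D.map (⇑(MvPolynomial.pderiv i))).prod)
      ∈ Ideal.span (Set.range fun i : Fin N => MvPolynomial.pderiv i W) ∧
    -- in particular the boundary-bulk map kills BRST-exact morphisms in Jac(W)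
    Ideal.Quotient.mk (Ideal.span (Set.range fun i : Fin N => MvPolynomial.pderiv i W))
        ((-1 : MvPolynomial (Fin N) ℂ) ^ (Nat.choose N 2)
          * supertrace ((D * χ + χ * D)
              * (List.ofFn fun i : Fin N => D.map (⇑(MvPolynomial.pderiv i))).prod))
      = 0 := by
  set J : Ideal (MvPolynomial (Fin N) ℂ) := Ideal.span (Set.range fun i : Fin N => MvPolynomial.pderiv i W) with hJ
  set L : List (Mat (MvPolynomial (Fin N) ℂ) n) := List.ofFn fun i : Fin N => D.map (⇑(MvPolynomial.pderiv i))
    with hL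
  set P : Mat (MvPolynomial (Fin N) ℂ) n := L.prod with hP
  have hlen : L.length = N := by simp [hL]
  have hLmem : ∀ M ∈ L, ∃ c ∈ J, D * M + M * D = c • (1 : Mat (MvPolynomial (Fin N) ℂ) n) := by
    intro M hM
    rw [hL, List.mem_ofFn] at hM
    obtain ⟨i, rfl⟩ := hM
    exact ⟨MvPolynomial.pderiv i W, Ideal.subset_span ⟨i, rfl⟩, anticomm W D hDD i⟩
  have hodds : ∀ M ∈ L, signMatrix (MvPolynomial (Fin N) ℂ) n * M * signMatrix (MvPolynomial (Fin N) ℂ) n = -M := by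
    intro M hM
    rw [hL, List.mem_ofFn] at hM
    obtain ⟨i, rfl⟩ := hM
    exact DM_odd D hDodd i
  set u := supertrace (χ * (D * P)) with hu
  set v := supertrace (χ * P * D) with hv
  have hkey : u - (-1 : MvPolynomial (Fin N) ℂ) ^ N * v ∈ J := by
    have h := key J D L hLmem χ
    rwa [hlen] at h
  have hcyc : supertrace (D * (χ * P)) = -v := by
    have h := str_cyc_odd (χ * P) D hDodd
    rw [← hv] at h
    linear_combination h
  have hexp : supertrace ((D * χ + χ * D) * P) = -v + u := by
    have e : (D * χ + χ * D) * P = D * (χ * P) + χ * (D * P) := by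
      simp only [Matrix.add_mul, Matrix.mul_assoc]
    rw [e, str_add, hcyc]
  have part1 : supertrace ((D * χ + χ * D) * P) ∈ J := by
    rcases Nat.even_or_odd N with hNe | hNo
    · have e2 : -v + u = u - (-1 : MvPolynomial (Fin N) ℂ) ^ N * v := by
        rw [Even.neg_one_pow hNe]; ring
      rw [hexp, e2]; exact hkey
    · have hPodd : signMatrix (MvPolynomial (Fin N) ℂ) n * P * signMatrix (MvPolynomial (Fin N) ℂ) n = -P := by
        have h := conjσ_list_prod L hodds
        rw [hlen, Odd.neg_one_pow hNo, neg_smul, one_smul] at h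
        exact h
      have hv0 : v = 0 := by
        refine str_odd_zero ?_
        rw [Matrix.mul_assoc χ P D, conjσ_mul, conjσ_mul, hχodd, hPodd, hDodd]
        simp only [Matrix.neg_mul, Matrix.mul_neg, neg_neg, Matrix.mul_assoc]
      rw [hexp, hv0]
      have := hkey
      rw [hv0, mul_zero, sub_zero] at this
      simpa using this
  refine ⟨part1, ?_⟩
  rw [Ideal.Quotient.eq_zero_iff_mem]
  exact Ideal.mul_mem_left _ _ part1
end

section
/- Let (A, d, ·) be a ℤ-graded associative ℂ-algebra with a differential d of degree +1 satisfying d∘d = 0 and d(x·y) = d(x)·y + (−1)^{|x|} x·d(y) for homogeneous x. Let H be a ℤ-graded vector space with zero differential, and let i : H → A, p : A → H be degree-0 chain maps (d∘i = 0, p∘d = 0) with p∘i = id_H, together with a degree −1 map h : A → A satisfying id_A − i∘p = d∘h + h∘d. Define, for homogeneous a, b, c, e ∈ H: m₂(a,b) = p( i(a)·i(b) ) and m₃(a,b,c) = p( h(i(a)·i(b))·i(c) ) − (−1)^{|a|} p( i(a)·h(i(b)·i(c)) ). Then: (i) m₂ is associative: m₂(m₂(a,b),c) = m₂(a,m₂(b,c));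 (ii) the n=4 Stasheff identity holds: m₃(m₂(a,b),c,e) − m₃(a,m₂(b,c),e) + m₃(a,b,m₂(c,e)) − m₂(m₃(a,b,c),e) − (−1)^{|a|} m₂(a, m₃(b,c,e)) = 0. -/
/-!
STATEMENT 14: Homotopy transfer of products for a ℤ-graded DG ℂ-algebra `(A, d, ·)`
along a deformation retraction `(i, p, h)` onto a graded space `H` with zero differential:
`m₂(a,b) = p(i(a)·i(b))` is associative, and the transferred `m₃` satisfies the `n = 4`
Stasheff identity.
-/

noncomputable section

variable (A : Type) [Ring A] [Algebra ℂ A]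
variable (𝒜 : ℤ → Submodule ℂ A) [GradedRing 𝒜]
variable (H : Type) [AddCommGroup H] [Module ℂ H] (ℋ : ℤ → Submodule ℂ H)
variable (d : A →ₗ[ℂ] A) (iH : H →ₗ[ℂ] A) (pH : A →ₗ[ℂ] H) (hh : A →ₗ[ℂ] A)

/-- The transferred product `m₂(a,b) = p(i(a)·i(b))`. -/
def mTwo (a b : H) : H := pH (iH a * iH b)

/-- The transferred triple product on homogeneous elements, where `k` is the degree of the
first argument:
`m₃(a,b,c) = p(h(i(a)·i(b))·i(c)) − (−1)^{|a|} p(i(a)·h(i(b)·i(c)))`. -/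
def mThree (k : ℤ) (a b c : H) : H :=
  pH (hh (iH a * iH b) * iH c)
    - ((Int.negOnePow k : ℤˣ) : ℤ) • pH (iH a * hh (iH b * iH c))

theorem transferred_products_associativity_and_stasheff4
    -- d is a differential of degree +1 satisfying the graded Leibniz rule
    (hd2 : d ∘ₗ d = 0)
    (hddeg : ∀ (k : ℤ), ∀ x ∈ 𝒜 k, d x ∈ 𝒜 (k + 1))
    (hleibniz : ∀ (k : ℤ) (x y : A), x ∈ 𝒜 k →
      d (x * y) = d x * y + ((Int.negOnePow k : ℤˣ) : ℤ) • (x * d y))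
    -- i and p are degree-0 chain maps (H carries the zero differential)
    (hideg : ∀ (k : ℤ), ∀ x ∈ ℋ k, iH x ∈ 𝒜 k)
    (hpdeg : ∀ (k : ℤ), ∀ x ∈ 𝒜 k, pH x ∈ ℋ k)
    (hdi : ∀ x : H, d (iH x) = 0)
    (hpd : ∀ x : A, pH (d x) = 0)
    (hpi : ∀ x : H, pH (iH x) = x)
    -- h is a degree −1 homotopy with id_A − i∘p = d∘h + h∘d
    (hhdeg : ∀ (k : ℤ), ∀ x ∈ 𝒜 k, hh x ∈ 𝒜 (k - 1))
    (hhomotopy : ∀ x : A, x - iH (pH x) = d (hh x) + hh (d x))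
    -- homogeneous elements
    (ka kb kc ke : ℤ) (a b c e : H)
    (ha : a ∈ ℋ ka) (hb : b ∈ ℋ kb) (hc : c ∈ ℋ kc) (he : e ∈ ℋ ke) :
    -- (i) m₂ is associative
    mTwo A H iH pH (mTwo A H iH pH a b) c = mTwo A H iH pH a (mTwo A H iH pH b c) ∧
    -- (ii) the n = 4 Stasheff identity
    mThree A H iH pH hh (ka + kb) (mTwo A H iH pH a b) c e
      - mThree A H iH pH hh ka a (mTwo A H iH pH b c) e
      + mThree A H iH pH hh ka a b (mTwo A H iH pH c e)
      - mTwo A H iH pH (mThree A H iH pH hh ka a b c) e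
      - ((Int.negOnePow ka : ℤˣ) : ℤ) • mTwo A H iH pH a (mThree A H iH pH hh kb b c e)
      = 0 := by
  -- helper lemmas
  have dh : ∀ x : A, d x = 0 → d (hh x) = x - iH (pH x) := by
    intro x hx
    have h1 := hhomotopy x
    rw [hx, map_zero, add_zero] at h1
    exact h1.symm
  have hd' : ∀ x : A, hh (d x) = x - iH (pH x) - d (hh x) := by
    intro x
    have h1 := hhomotopy x
    rw [h1]; abel
  have dmul : ∀ (k : ℤ) (x y : A), x ∈ 𝒜 k → d x = 0 → d y = 0 → d (x * y) = 0 := by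
    intro k x y hx hdx hdy
    rw [hleibniz k x y hx, hdx, hdy, zero_mul, mul_zero, smul_zero, add_zero]
  have dmulr : ∀ (k : ℤ) (z w : A), z ∈ 𝒜 k → d w = 0 → d z * w = d (z * w) := by
    intro k z w hz hw
    rw [hleibniz k z w hz, hw, mul_zero, smul_zero, add_zero]
  have pdmul : ∀ (k : ℤ) (z w : A), z ∈ 𝒜 k → d w = 0 → pH (d z * w) = 0 := by
    intro k z w hz hw
    rw [dmulr k z w hz hw, hpd]
  have muld_eq : ∀ (k : ℤ) (x y : A), x ∈ 𝒜 k → d x = 0 →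
      x * d y = ((Int.negOnePow k : ℤˣ) : ℤ) • d (x * y) := by
    intro k x y hx hdx
    have h1 : d (x * y) = ((Int.negOnePow k : ℤˣ) : ℤ) • (x * d y) := by
      rw [hleibniz k x y hx, hdx, zero_mul, zero_add]
    rw [h1, smul_smul, ← Units.val_mul, Int.units_mul_self, Units.val_one, one_smul]
  have pmuld : ∀ (k : ℤ) (x z : A), x ∈ 𝒜 k → d x = 0 → pH (x * d z) = 0 := by
    intro k x z hx hdx
    rw [muld_eq k x z hx hdx, map_zsmul, hpd, smul_zero]
  -- memberships and cycles
  have mα : iH a ∈ 𝒜 ka := hideg ka a ha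
  have mβ : iH b ∈ 𝒜 kb := hideg kb b hb
  have mγ : iH c ∈ 𝒜 kc := hideg kc c hc
  have mαβ : iH a * iH b ∈ 𝒜 (ka + kb) := SetLike.mul_mem_graded mα mβ
  have mβγ : iH b * iH c ∈ 𝒜 (kb + kc) := SetLike.mul_mem_graded mβ mγ
  have mγε : iH c * iH e ∈ 𝒜 (kc + ke) := SetLike.mul_mem_graded mγ (hideg ke e he)
  have mH1 : hh (iH a * iH b) ∈ 𝒜 (ka + kb - 1) := hhdeg _ _ mαβ
  have mH2 : hh (iH b * iH c) ∈ 𝒜 (kb + kc - 1) := hhdeg _ _ mβγ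
  have mH3 : hh (iH c * iH e) ∈ 𝒜 (kc + ke - 1) := hhdeg _ _ mγε
  have dαβ : d (iH a * iH b) = 0 := dmul ka _ _ mα (hdi a) (hdi b)
  have dβγ : d (iH b * iH c) = 0 := dmul kb _ _ mβ (hdi b) (hdi c)
  have dγε : d (iH c * iH e) = 0 := dmul kc _ _ mγ (hdi c) (hdi e)
  have ipαβ : iH (pH (iH a * iH b)) = iH a * iH b - d (hh (iH a * iH b)) := by
    rw [dh _ dαβ]; abel
  have ipβγ : iH (pH (iH b * iH c)) = iH b * iH c - d (hh (iH b * iH c)) := by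
    rw [dh _ dβγ]; abel
  have ipγε : iH (pH (iH c * iH e)) = iH c * iH e - d (hh (iH c * iH e)) := by
    rw [dh _ dγε]; abel
  constructor
  · simp only [mTwo]
    rw [ipαβ, ipβγ, sub_mul, mul_sub, map_sub, map_sub,
      pdmul _ _ _ mH1 (hdi c), pmuld ka _ _ mα (hdi a), sub_zero, sub_zero, mul_assoc]
  · simp only [mThree, mTwo, map_sub, map_zsmul]
    rw [ipαβ, ipβγ, ipγε]
    simp only [sub_mul, mul_sub, map_sub, smul_sub]
    rw [dmulr _ _ _ mH1 (hdi c), dmulr _ _ _ mH2 (hdi e),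
        muld_eq ka (iH a) (hh (iH b * iH c)) mα (hdi a),
        muld_eq kb (iH b) (hh (iH c * iH e)) mβ (hdi b)]
    have keyD1H3 : pH (d (hh (iH a * iH b)) * hh (iH c * iH e)) =
        -(((Int.negOnePow (ka + kb - 1) : ℤˣ) : ℤ) •
            pH (hh (iH a * iH b) * d (hh (iH c * iH e)))) := by
      have h2 := congrArg pH (hleibniz (ka + kb - 1) (hh (iH a * iH b)) (hh (iH c * iH e)) mH1)
      rw [hpd, map_add, map_zsmul] at h2
      exact eq_neg_of_add_eq_zero_left h2.symm
    rw [keyD1H3]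
    simp only [map_zsmul]
    rw [hd' (hh (iH a * iH b) * iH c), hd' (hh (iH b * iH c) * iH e),
        hd' (iH a * hh (iH b * iH c)), hd' (iH b * hh (iH c * iH e))]
    simp only [sub_mul, mul_sub, map_sub, smul_sub, smul_mul_assoc, mul_smul_comm, map_zsmul]
    rw [pdmul _ _ _ (hhdeg _ _ (SetLike.mul_mem_graded mH1 mγ)) (hdi e),
        pdmul _ _ _ (hhdeg _ _ (SetLike.mul_mem_graded mα mH2)) (hdi e),
        pmuld ka (iH a) (hh (hh (iH b * iH c) * iH e)) mα (hdi a),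
        pmuld ka (iH a) (hh (iH b * hh (iH c * iH e))) mα (hdi a)]
    simp only [smul_zero, sub_zero, mul_assoc]
    rcases Int.even_or_odd ka with hka | hka <;> rcases Int.even_or_odd kb with hkb | hkb
    · rw [Int.negOnePow_even _ hka, Int.negOnePow_even _ hkb,
          Int.negOnePow_even _ (hka.add hkb), Int.negOnePow_odd _ ((hka.add hkb).sub_odd odd_one)]
      simp only [Units.val_one, Units.val_neg, one_smul, neg_smul, smul_neg, neg_neg]
      abel
    · rw [Int.negOnePow_even _ hka, Int.negOnePow_odd _ hkb,
          Int.negOnePow_odd _ (hka.add_odd hkb), Int.negOnePow_even _ ((hka.add_odd hkb).sub_odd odd_one)]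
      simp only [Units.val_one, Units.val_neg, one_smul, neg_smul, smul_neg, neg_neg]
      abel
    · rw [Int.negOnePow_odd _ hka, Int.negOnePow_even _ hkb,
          Int.negOnePow_odd _ (hka.add_even hkb), Int.negOnePow_even _ ((hka.add_even hkb).sub_odd odd_one)]
      simp only [Units.val_one, Units.val_neg, one_smul, neg_smul, smul_neg, neg_neg]
      abel
    · rw [Int.negOnePow_odd _ hka, Int.negOnePow_odd _ hkb,
          Int.negOnePow_even _ (hka.add_odd hkb), Int.negOnePow_odd _ ((hka.add_odd hkb).sub_odd odd_one)]
      simp only [Units.val_one, Units.val_neg, one_smul, neg_smul, smul_neg, neg_neg]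
      abel
end
end
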